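/- arXiv:2411.05458 — 2 statements merged into one kernel-verified Lean document; each statement's English description precedes it below -/
import Mathlib

section
/- If α = p₁p₂⋯pₙ is a stamp folding of order n, then every string rotation of α (i.e., p₂p₃⋯pₙp₁) is also a stamp folding of order n. -/
/-- 1-based position of symbol `e` in the string `p`. -/
def posOf (p : List ℕ) (e : ℕ) : ℕ := p.idxOf e + 1

/-- `x` lies strictly between `a` and `b`. -/
def StrictlyBetween (a b x : ℕ) : Prop := min a b < x ∧ x < max a b

/-- Two same-side arcs with endpoint pairs `{a,b}` and `{c,d}` cross
if exactly one of `c`, `d` lies strictly between `a` and `b`. -/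
def ArcsCross (a b c d : ℕ) : Prop :=
  Xor' (StrictlyBetween a b c) (StrictlyBetween a b d)

/-- A stamp folding of order `n`: a permutation of `1,…,n` (as a list, `p i` is
the stamp at position `i`) such that no two bottom arcs (joining the positions
of stamps `i` and `i+1` for odd `i`) cross, and no two top arcs (even `i`) cross. -/
def IsStampFolding (n : ℕ) (p : List ℕ) : Prop :=
  p.Perm (List.range' 1 n) ∧
  ∀ i j : ℕ, 1 ≤ i → i < j → j + 1 ≤ n → i % 2 = j % 2 →
    ¬ ArcsCross (posOf p i) (posOf p (i + 1)) (posOf p j) (posOf p (j + 1))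

/-- A semi-meander of order `n`: a stamp folding in which stamp `n` is visible
from above when `n` is even and from below when `n` is odd, i.e. no arc on the
relevant side strictly covers the position of stamp `n`. -/
def IsSemiMeander (n : ℕ) (p : List ℕ) : Prop :=
  IsStampFolding n p ∧
  ∀ i : ℕ, 1 ≤ i → i + 1 ≤ n → i % 2 = n % 2 →
    ¬ StrictlyBetween (posOf p i) (posOf p (i + 1)) (posOf p n)

/-!
Close the pile into a circle. Two arcs on the same side with four distinct endpoints cross
exactly when their endpoints alternate around the circle, which is invariant under rotating
the circle. Moving the first stamp of the pile to the end only rotates the positions in this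
way, and the arcs of stamps `i, i+1` and `j, j+1` with `i + 2 ≤ j` have distinct endpoints.
-/

/-- The position of a stamp after moving the first stamp of a pile of `n` stamps to the end. -/
def rotPos (n x : ℕ) : ℕ := if x = 1 then n else x - 1

lemma arcsCross_iff {a b c d : ℕ} :
    ArcsCross a b c d ↔ Xor (StrictlyBetween a b c) (StrictlyBetween a b d) :=
  Iff.rfl

lemma arcsCross_of_arcsCross_rotPos {n a b c d : ℕ}
    (ha : a ∈ Finset.Icc 1 n) (hb : b ∈ Finset.Icc 1 n)
    (hc : c ∈ Finset.Icc 1 n) (hd : d ∈ Finset.Icc 1 n)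
    (hac : a ≠ c) (had : a ≠ d) (hbc : b ≠ c) (hbd : b ≠ d)
    (h : ArcsCross (rotPos n a) (rotPos n b) (rotPos n c) (rotPos n d)) :
    ArcsCross a b c d := by
  simp only [Finset.mem_Icc] at ha hb hc hd
  simp only [arcsCross_iff, xor_def, StrictlyBetween, rotPos] at *
  split_ifs at h <;> omega

lemma posOf_mem_Icc {p : List ℕ} {e : ℕ} (he : e ∈ p) : posOf p e ∈ Finset.Icc 1 p.length := by
  have := List.idxOf_lt_length_iff.mpr he
  simp only [posOf, Finset.mem_Icc]
  omega

lemma eq_of_posOf_eq {p : List ℕ} {e e' : ℕ} (he : e ∈ p) (h : posOf p e = posOf p e') :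
    e = e' :=
  (List.idxOf_inj he).mp (Nat.succ_injective h)

lemma posOf_rotate_one {p : List ℕ} (hp : p.Nodup) {e : ℕ} (he : e ∈ p) :
    posOf (p.rotate 1) e = rotPos p.length (posOf p e) := by
  cases p with
  | nil => simp at he
  | cons x xs =>
    have hx : x ∉ xs := (List.nodup_cons.mp hp).1
    rw [List.rotate_cons_succ, List.rotate_zero]
    rcases List.mem_cons.mp he with rfl | hexs
    · simp [posOf, List.idxOf_append_of_notMem hx, rotPos]
    · have hne : x ≠ e := by rintro rfl; exact hx hexs
      simp [posOf, List.idxOf_append_of_mem hexs, List.idxOf_cons_ne xs hne, rotPos]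

namespace IsStampFolding

variable {n : ℕ} {p : List ℕ}

lemma length_eq (h : IsStampFolding n p) : p.length = n := by
  simpa using h.1.length_eq

lemma nodup (h : IsStampFolding n p) : p.Nodup :=
  h.1.nodup_iff.mpr List.nodup_range'

lemma mem_iff (h : IsStampFolding n p) {e : ℕ} : e ∈ p ↔ 1 ≤ e ∧ e < 1 + n := by
  rw [h.1.mem_iff, List.mem_range'_1]

lemma rotate_one (h : IsStampFolding n p) : IsStampFolding n (p.rotate 1) := by
  refine ⟨(List.rotate_perm p 1).trans h.1, fun i j hi hij hj hpar hcr => h.2 i j hi hij hj hpar ?_⟩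
  obtain ⟨hi₀, hi₁, hj₀, hj₁⟩ : i ∈ p ∧ i + 1 ∈ p ∧ j ∈ p ∧ j + 1 ∈ p :=
    ⟨h.mem_iff.mpr (by omega), h.mem_iff.mpr (by omega), h.mem_iff.mpr (by omega),
      h.mem_iff.mpr (by omega)⟩
  have hIcc : ∀ e ∈ p, posOf p e ∈ Finset.Icc 1 n := fun e he => h.length_eq ▸ posOf_mem_Icc he
  have hne : ∀ e ∈ p, ∀ e', e ≠ e' → posOf p e ≠ posOf p e' :=
    fun e he e' hee' heq => hee' (eq_of_posOf_eq he heq)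
  rw [posOf_rotate_one h.nodup hi₀, posOf_rotate_one h.nodup hi₁, posOf_rotate_one h.nodup hj₀,
    posOf_rotate_one h.nodup hj₁, h.length_eq] at hcr
  exact arcsCross_of_arcsCross_rotPos (hIcc _ hi₀) (hIcc _ hi₁) (hIcc _ hj₀) (hIcc _ hj₁)
    (hne _ hi₀ _ (by omega)) (hne _ hi₀ _ (by omega)) (hne _ hi₁ _ (by omega))
    (hne _ hi₁ _ (by omega)) hcr

end IsStampFolding

/-- Every string rotation of a stamp folding of order `n` is a stamp folding of order `n`. -/
theorem stamp_folding_rotate (n : ℕ) (p : List ℕ) (h : IsStampFolding n p) (k : ℕ) :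
    IsStampFolding n (p.rotate k) := by
  induction k with
  | zero => simpa using h
  | succ k ih => simpa [List.rotate_rotate] using ih.rotate_one
end

section
/- For n ≥ 2, the number of stamp foldings of order n equals n times the number of semi-meanders of order n−1. -/
/-! ### Auxiliary lemmas -/

lemma posOf_cons_self (x : ℕ) (q : List ℕ) : posOf (x :: q) x = 1 := by
  simp [posOf]

lemma posOf_cons_ne {x e : ℕ} (q : List ℕ) (h : x ≠ e) :
    posOf (x :: q) e = posOf q e + 1 := by
  simp [posOf, List.idxOf_cons_ne _ h]

lemma perm_facts {n : ℕ} {p : List ℕ} (h : p.Perm (List.range' 1 n)) :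
    p.length = n ∧ p.Nodup ∧ (∀ e, e ∈ p ↔ 1 ≤ e ∧ e ≤ n) := by
  refine ⟨by simpa using h.length_eq, h.nodup_iff.mpr (List.nodup_range' (s := 1) (n := n)), fun e => ?_⟩
  rw [h.mem_iff, List.mem_range'_1]
  omega

lemma posOf_le_length {p : List ℕ} {e : ℕ} (he : e ∈ p) : posOf p e ≤ p.length := by
  have := List.idxOf_lt_length_iff.mpr he
  unfold posOf; omega

lemma posOf_inj {p : List ℕ} {e f : ℕ} (he : e ∈ p) (hf : f ∈ p)
    (h : posOf p e = posOf p f) : e = f := by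
  have h1 : p.idxOf e = p.idxOf f := by unfold posOf at h; omega
  have he' := List.idxOf_lt_length_iff.mpr he
  have hf' := List.idxOf_lt_length_iff.mpr hf
  have g1 : p.get ⟨p.idxOf e, he'⟩ = e := List.idxOf_get he'
  have g2 : p.get ⟨p.idxOf f, hf'⟩ = f := List.idxOf_get hf'
  rw [← g1, ← g2]
  congr 1
  exact Fin.ext h1

/-- Crossing of arcs is invariant under a one-step cyclic shift of positions. -/
lemma cross_shift {n a b c d a' b' c' d' : ℕ}
    (hab : a ≠ b) (hac : a ≠ c) (had : a ≠ d) (hbc : b ≠ c) (hbd : b ≠ d) (hcd : c ≠ d)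
    (ha : (a = 1 ∧ a' = n) ∨ (2 ≤ a ∧ a ≤ n ∧ a' = a - 1))
    (hb : (b = 1 ∧ b' = n) ∨ (2 ≤ b ∧ b ≤ n ∧ b' = b - 1))
    (hc : (c = 1 ∧ c' = n) ∨ (2 ≤ c ∧ c ≤ n ∧ c' = c - 1))
    (hd : (d = 1 ∧ d' = n) ∨ (2 ≤ d ∧ d ≤ n ∧ d' = d - 1)) :
    ArcsCross a' b' c' d' ↔ ArcsCross a b c d := by
  unfold ArcsCross StrictlyBetween Xor' Xor
  omega

/-- How 1-based positions change under a one-step rotation of the string. -/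
lemma posOf_rotate_one_spec {n : ℕ} {p : List ℕ} (h : p.Perm (List.range' 1 n))
    {e : ℕ} (he : e ∈ p) :
    (posOf p e = 1 ∧ posOf (p.rotate 1) e = n) ∨
    (2 ≤ posOf p e ∧ posOf p e ≤ n ∧ posOf (p.rotate 1) e = posOf p e - 1) := by
  obtain ⟨hlen, hnd, _⟩ := perm_facts h
  cases p with
  | nil => simp at he
  | cons x q =>
    have hrot : (x :: q).rotate 1 = q ++ [x] := by
      simpa using List.rotate_cons_succ q x 0
    have hlq : q.length + 1 = n := by simpa using hlen
    by_cases hex : e = x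
    · left
      have hx : x ∉ q := (List.nodup_cons.mp hnd).1
      have hx' : e ∉ q := by rw [hex]; exact hx
      constructor
      · rw [hex]; exact posOf_cons_self x q
      · rw [hrot]
        unfold posOf
        rw [List.idxOf_append_of_notMem hx', hex]
        simp only [List.idxOf_cons_self]
        omega
    · right
      have heq : e ∈ q := by
        rcases List.mem_cons.mp he with h' | h'
        · exact absurd h' hex
        · exact h'
      have h1 : posOf (x :: q) e = posOf q e + 1 := posOf_cons_ne q (fun hh => hex hh.symm)
      have h2 : posOf ((x :: q).rotate 1) e = posOf q e := by
        rw [hrot]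
        unfold posOf
        rw [List.idxOf_append_of_mem heq]
      have h3 : posOf q e ≤ q.length := posOf_le_length heq
      have h4 : 1 ≤ posOf q e := by unfold posOf; omega
      omega

lemma isStampFolding_rotate_one {n : ℕ} {p : List ℕ} (h : IsStampFolding n p) :
    IsStampFolding n (p.rotate 1) := by
  obtain ⟨hperm, hcross⟩ := h
  obtain ⟨hlen, hnd, hmem⟩ := perm_facts hperm
  refine ⟨(List.rotate_perm p 1).trans hperm, ?_⟩
  intro i j hi hij hjn hpar hc
  have hij2 : i + 2 ≤ j := by omega
  have mi : i ∈ p := (hmem i).mpr ⟨hi, by omega⟩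
  have mi1 : (i + 1) ∈ p := (hmem _).mpr ⟨by omega, by omega⟩
  have mj : j ∈ p := (hmem j).mpr ⟨by omega, by omega⟩
  have mj1 : (j + 1) ∈ p := (hmem _).mpr ⟨by omega, by omega⟩
  have d1 : posOf p i ≠ posOf p (i + 1) := fun hh => by have := posOf_inj mi mi1 hh; omega
  have d2 : posOf p i ≠ posOf p j := fun hh => by have := posOf_inj mi mj hh; omega
  have d3 : posOf p i ≠ posOf p (j + 1) := fun hh => by have := posOf_inj mi mj1 hh; omega
  have d4 : posOf p (i + 1) ≠ posOf p j := fun hh => by have := posOf_inj mi1 mj hh; omega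
  have d5 : posOf p (i + 1) ≠ posOf p (j + 1) := fun hh => by
    have := posOf_inj mi1 mj1 hh; omega
  have d6 : posOf p j ≠ posOf p (j + 1) := fun hh => by have := posOf_inj mj mj1 hh; omega
  exact hcross i j hi hij hjn hpar ((cross_shift d1 d2 d3 d4 d5 d6
    (posOf_rotate_one_spec hperm mi) (posOf_rotate_one_spec hperm mi1)
    (posOf_rotate_one_spec hperm mj) (posOf_rotate_one_spec hperm mj1)).mp hc)

lemma isStampFolding_rotate {n : ℕ} {p : List ℕ} (k : ℕ) (h : IsStampFolding n p) :
    IsStampFolding n (p.rotate k) := by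
  induction k with
  | zero => simpa using h
  | succ k ih =>
    rw [← List.rotate_rotate]
    exact isStampFolding_rotate_one ih

lemma sb_shift {a b c : ℕ} :
    StrictlyBetween (a + 1) (b + 1) (c + 1) ↔ StrictlyBetween a b c := by
  unfold StrictlyBetween; omega

lemma cross_shift1 {a b c d : ℕ} :
    ArcsCross (a + 1) (b + 1) (c + 1) (d + 1) ↔ ArcsCross a b c d := by
  unfold ArcsCross StrictlyBetween Xor' Xor; omega

lemma cross_one {a b c : ℕ} :
    ArcsCross (a + 1) (b + 1) (c + 1) 1 ↔ StrictlyBetween a b c := by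
  unfold ArcsCross StrictlyBetween Xor' Xor; omega

/-- `(m+1) :: q` is a stamp folding of order `m+1` iff `q` is a semi-meander of
order `m`. -/
lemma cons_folding_iff {m : ℕ} {q : List ℕ} :
    IsStampFolding (m + 1) ((m + 1) :: q) ↔ IsSemiMeander m q := by
  have hr : List.range' 1 (m + 1) = List.range' 1 m ++ [m + 1] := by
    simpa [Nat.add_comm] using List.range'_concat (step := 1) (s := 1) (n := m)
  have hperm_iff : ((m + 1) :: q).Perm (List.range' 1 (m + 1)) ↔
      q.Perm (List.range' 1 m) := by
    rw [hr]
    constructor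
    · intro h
      exact (List.perm_cons _).mp (h.trans (List.perm_append_singleton _ _))
    · intro h
      exact (h.cons _).trans (List.perm_append_singleton _ _).symm
  constructor
  · rintro ⟨hperm, hcross⟩
    have hq : q.Perm (List.range' 1 m) := hperm_iff.mp hperm
    obtain ⟨hlq, hndq, hmemq⟩ := perm_facts hq
    have pe : ∀ e, 1 ≤ e → e ≤ m → posOf ((m + 1) :: q) e = posOf q e + 1 := by
      intro e h1 h2
      exact posOf_cons_ne q (by omega)
    refine ⟨⟨hq, ?_⟩, ?_⟩
    · intro i j hi hij hjm hpar hc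
      have := hcross i j hi hij (by omega) hpar
      rw [pe i hi (by omega), pe (i + 1) (by omega) (by omega),
        pe j (by omega) (by omega), pe (j + 1) (by omega) (by omega)] at this
      exact this (cross_shift1.mpr hc)
    · intro i hi him hpar hc
      have him' : i < m := by omega
      have := hcross i m hi him' (by omega) hpar
      rw [pe i hi (by omega), pe (i + 1) (by omega) (by omega),
        pe m (by omega) (le_refl m), posOf_cons_self] at this
      exact this (cross_one.mpr hc)
  · rintro ⟨⟨hq, hcross⟩, hvis⟩
    obtain ⟨hlq, hndq, hmemq⟩ := perm_facts hq
    have pe : ∀ e, 1 ≤ e → e ≤ m → posOf ((m + 1) :: q) e = posOf q e + 1 := by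
      intro e h1 h2
      exact posOf_cons_ne q (by omega)
    refine ⟨hperm_iff.mpr hq, ?_⟩
    intro i j hi hij hjn hpar hc
    by_cases hjm : j + 1 ≤ m
    · rw [pe i hi (by omega), pe (i + 1) (by omega) (by omega),
        pe j (by omega) (by omega), pe (j + 1) (by omega) (by omega)] at hc
      exact hcross i j hi hij hjm hpar (cross_shift1.mp hc)
    · have hjm' : j = m := by omega
      rw [hjm'] at hc hpar
      rw [pe i hi (by omega), pe (i + 1) (by omega) (by omega),
        pe m (by omega) (le_refl m), posOf_cons_self] at hc
      exact hvis i hi (by omega) hpar (cross_one.mp hc)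

/-- Index of the distinguished first element after rotating. -/
lemma indexOf_rotate_cons {a : ℕ} {q : List ℕ} (ha : a ∉ q) {k : ℕ}
    (hk : k < q.length + 1) :
    ((a :: q).rotate k).idxOf a = if k = 0 then 0 else q.length + 1 - k := by
  rcases Nat.eq_zero_or_pos k with hk0 | hk0
  · subst hk0
    simp
  · have hk1 : k ≤ (a :: q).length := by simp; omega
    rw [List.rotate_eq_drop_append_take hk1]
    have hdrop : List.drop k (a :: q) = List.drop (k - 1) q := by
      cases k with
      | zero => omega
      | succ k' => simp
    have hnd : a ∉ List.drop k (a :: q) := by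
      rw [hdrop]
      intro hmem
      exact ha ((List.drop_sublist _ _).mem hmem)
    rw [List.idxOf_append_of_notMem hnd]
    have htake : List.take k (a :: q) = a :: List.take (k - 1) q := by
      cases k with
      | zero => omega
      | succ k' => simp
    rw [htake, List.idxOf_cons_self]
    have hdl : (List.drop k (a :: q)).length = q.length + 1 - k := by
      rw [List.length_drop]; simp
    rw [hdl]
    simp only [if_neg (by omega : ¬ k = 0)]
    omega

/-- For `n ≥ 2`, the number of stamp foldings of order `n` equals `n` times the
number of semi-meanders of order `n - 1`. -/
theorem stamp_folding_count_eq (n : ℕ) (hn : 2 ≤ n) :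
    Set.ncard {p : List ℕ | IsStampFolding n p} =
      n * Set.ncard {q : List ℕ | IsSemiMeander (n - 1) q} := by
  obtain ⟨m, rfl⟩ : ∃ m, n = m + 1 := ⟨n - 1, by omega⟩
  simp only [Nat.add_sub_cancel]
  set Q : Set (List ℕ) := {q | IsSemiMeander m q} with hQdef
  set S : Set (List ℕ) := {p | IsStampFolding (m + 1) p} with hSdef
  have key : ∀ (k : Fin (m + 1)) (q : ↥Q), ((m + 1) :: (q : List ℕ)).rotate k ∈ S :=
    fun k q => isStampFolding_rotate _ (cons_folding_iff.mpr q.2)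
  let g : Fin (m + 1) × ↥Q → ↥S := fun kq =>
    ⟨((m + 1) :: (kq.2 : List ℕ)).rotate kq.1, key _ _⟩
  have hbij : Function.Bijective g := by
    constructor
    · rintro ⟨k, q, hq⟩ ⟨k', q', hq'⟩ hgg
      have heq : ((m + 1) :: q).rotate (k : ℕ) = ((m + 1) :: q').rotate (k' : ℕ) :=
        congrArg Subtype.val hgg
      obtain ⟨hlq, _, hmemq⟩ := perm_facts hq.1.1
      obtain ⟨hlq', _, hmemq'⟩ := perm_facts hq'.1.1
      have hnm : (m + 1) ∉ q := fun hh => by have := (hmemq _).mp hh; omega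
      have hnm' : (m + 1) ∉ q' := fun hh => by have := (hmemq' _).mp hh; omega
      have h1 : (((m + 1) :: q).rotate (k : ℕ)).idxOf (m + 1) =
          (((m + 1) :: q').rotate (k' : ℕ)).idxOf (m + 1) := by rw [heq]
      rw [indexOf_rotate_cons hnm (by rw [hlq]; exact k.isLt),
        indexOf_rotate_cons hnm' (by rw [hlq']; exact k'.isLt)] at h1
      have hkk : (k : ℕ) = (k' : ℕ) := by
        have hk := k.isLt
        have hk' := k'.isLt
        rw [hlq, hlq'] at h1
        split_ifs at h1 <;> omega
      rw [hkk] at heq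
      have hcons : (m + 1) :: q = (m + 1) :: q' := List.rotate_injective _ heq
      have hqq : q = q' := by injection hcons
      subst hqq
      exact Prod.ext (Fin.ext hkk) rfl
    · rintro ⟨p, hp⟩
      obtain ⟨hlen, hnd, hmem⟩ := perm_facts hp.1
      have hmemn : (m + 1) ∈ p := (hmem _).mpr ⟨by omega, le_refl _⟩
      set k0 := p.idxOf (m + 1) with hk0
      have hk0lt : k0 < m + 1 := by rw [← hlen]; exact List.idxOf_lt_length_iff.mpr hmemn
      have hrfold : IsStampFolding (m + 1) (p.rotate k0) := isStampFolding_rotate k0 hp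
      have hlenr : (p.rotate k0).length = m + 1 := by rw [List.length_rotate, hlen]
      have hget : (p.rotate k0).get ⟨0, by omega⟩ = m + 1 := by
        rw [List.get_rotate]
        have h0 : (0 + k0) % p.length = k0 := by
          rw [Nat.zero_add, hlen]
          exact Nat.mod_eq_of_lt hk0lt
        simp only [h0]
        exact List.idxOf_get (List.idxOf_lt_length_iff.mpr hmemn)
      obtain ⟨a, q, hcons⟩ : ∃ a q, p.rotate k0 = a :: q := by
        cases hrot : p.rotate k0 with
        | nil => rw [hrot] at hlenr; simp at hlenr
        | cons a q => exact ⟨a, q, rfl⟩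
      have hgo : (p.rotate k0)[0]? = some (m + 1) := by
        rw [List.getElem?_eq_getElem (by omega : 0 < (p.rotate k0).length)]
        simpa using hget
      rw [hcons] at hgo
      have ha : a = m + 1 := by simpa using hgo
      subst ha
      have hqQ : q ∈ Q := cons_folding_iff.mp (hcons ▸ hrfold)
      have hql : q.length = m := by
        have := perm_facts hqQ.1.1
        exact this.1
      refine ⟨⟨⟨(m + 1 - k0) % (m + 1), Nat.mod_lt _ (by omega)⟩, ⟨q, hqQ⟩⟩, ?_⟩
      apply Subtype.ext
      show ((m + 1) :: q).rotate ((m + 1 - k0) % (m + 1)) = p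
      have h5 : ((m + 1) :: q).rotate ((m + 1 - k0) % (m + 1)) =
          ((m + 1) :: q).rotate (m + 1 - k0) := by
        have h6 := List.rotate_mod ((m + 1) :: q) (m + 1 - k0)
        rwa [show ((m + 1) :: q).length = m + 1 by simp [hql]] at h6
      rw [h5, ← hcons, List.rotate_rotate, show k0 + (m + 1 - k0) = m + 1 by omega,
        ← hlen, List.rotate_length]
  have h1 : Nat.card (Fin (m + 1) × ↥Q) = Nat.card ↥S := Nat.card_eq_of_bijective g hbij
  rw [← Nat.card_coe_set_eq, ← Nat.card_coe_set_eq, ← h1, Nat.card_prod,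
    Nat.card_eq_fintype_card, Fintype.card_fin]
end
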